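/- arXiv:0904.0926 — 3 statements merged into one kernel-verified Lean document; each statement's English description precedes it below -/
import Mathlib

section
/- The rook monoid R_n is generated as a monoid by the transpositions s_1,…,s_{n−1} together with the single idempotent e_{n−1} (the partial identity on {1,…,n−1}). -/
open scoped Classical

abbrev Rook (n : ℕ) : Type := Fin n ≃. Fin n

instance rookMonoid (n : ℕ) : Monoid (Rook n) where
  mul f g := f.trans g
  one := PEquiv.refl (Fin n)
  mul_assoc := PEquiv.trans_assoc
  one_mul := PEquiv.refl_trans
  mul_one := PEquiv.trans_refl

noncomputable def egen (n j : ℕ) : Rook n :=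
  PEquiv.ofSet {x : Fin n | (x : ℕ) < j}

noncomputable def sgen (n i : ℕ) (h1 : 1 ≤ i) (h2 : i ≤ n - 1) : Rook n :=
  (Equiv.swap (⟨i - 1, by omega⟩ : Fin n) ⟨i, by omega⟩).toPEquiv

/-!
Every partial bijection of a finite set extends to a permutation, so a rook is a partial identity
followed by a permutation. Permutations are products of the adjacent transpositions. The partial
identity on `s` is the product of the partial identities on `{a}ᶜ` for `a ∉ s`, and each of these is
the conjugate of `e_{n-1}`, the partial identity on `{n-1}ᶜ` (0-indexed), by the transposition
`(a, n-1)`.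
-/

namespace PEquiv

variable {α β : Type*}

theorem ofSet_trans_ofSet (s t : Set α) [DecidablePred (· ∈ s)] [DecidablePred (· ∈ t)]
    [DecidablePred (· ∈ s ∩ t)] : (ofSet s).trans (ofSet t) = ofSet (s ∩ t) := by
  ext a b
  simp only [trans_eq_some, ofSet_eq_some_iff, Set.mem_inter_iff]
  constructor
  · rintro ⟨c, ⟨rfl, hs⟩, rfl, ht⟩
    exact ⟨rfl, hs, ht⟩
  · rintro ⟨rfl, hs, ht⟩
    exact ⟨b, ⟨rfl, hs⟩, rfl, ht⟩

theorem _root_.Equiv.toPEquiv_trans_ofSet_trans_symm (σ : α ≃ β) (s : Set β)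
    [DecidablePred (· ∈ s)] [DecidablePred (· ∈ σ ⁻¹' s)] :
    (σ.toPEquiv.trans (ofSet s)).trans σ.symm.toPEquiv = ofSet (σ ⁻¹' s) := by
  ext a b
  simp only [trans_eq_some, ofSet_eq_some_iff, Equiv.toPEquiv_apply, Option.some.injEq,
    Set.mem_preimage]
  constructor
  · rintro ⟨c, ⟨d, rfl, rfl, hd⟩, rfl⟩
    simp [hd]
  · rintro ⟨rfl, hs⟩
    exact ⟨σ b, ⟨σ b, rfl, rfl, hs⟩, by simp⟩

theorem exists_perm_extend [Finite α] (f : α ≃. α) :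
    ∃ σ : Equiv.Perm α, ∀ a b, b ∈ f a → σ a = b := by
  obtain ⟨σ, hσ⟩ := Equiv.Perm.exists_extending_pair (fun a : {a // (f a).isSome} ↦ a.1)
    (fun a ↦ (f a).get a.2) Subtype.val_injective
    fun a a' h ↦ Subtype.ext <|
      f.inj (Option.get_mem a.2) (by simpa only [h] using Option.get_mem a'.2)
  refine ⟨σ, fun a b hb ↦ ?_⟩
  have hsome : (f a).isSome := Option.isSome_iff_exists.2 ⟨b, hb⟩
  simpa [Option.mem_def.1 hb] using hσ ⟨a, hsome⟩

theorem eq_ofSet_trans_toPEquiv (f : α ≃. β) (σ : α ≃ β) (hσ : ∀ a b, b ∈ f a → σ a = b) :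
    f = (ofSet {a | (f a).isSome}).trans σ.toPEquiv := by
  ext a b
  simp only [trans_eq_some, ofSet_eq_some_iff, Equiv.toPEquiv_apply, Option.some.injEq,
    Set.mem_ofPred_eq]
  constructor
  · intro hb
    exact ⟨a, ⟨rfl, by simp [hb]⟩, hσ a b hb⟩
  · rintro ⟨a, ⟨rfl, ha⟩, rfl⟩
    exact Option.mem_def.1 (hσ a _ (Option.get_mem ha) ▸ Option.get_mem ha)

end PEquiv

namespace Rook

variable {n : ℕ}

theorem mul_def (f g : Rook n) : f * g = f.trans g := rfl

/-- The inverse is needed because `Rook n` composes left to right and `Equiv.Perm` right to left. -/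
def ofPerm : Equiv.Perm (Fin n) →* Rook n where
  toFun σ := σ⁻¹.toPEquiv
  map_one' := Equiv.toPEquiv_refl
  map_mul' σ τ := by
    rw [mul_inv_rev, Equiv.Perm.mul_def, Equiv.toPEquiv_trans]
    rfl

theorem ofPerm_apply (σ : Equiv.Perm (Fin n)) : ofPerm σ = σ⁻¹.toPEquiv := rfl

theorem sgen_eq_ofPerm_swap {m : ℕ} (j : Fin m) :
    sgen (m + 1) (j + 1) (by omega) (by omega) = ofPerm (Equiv.swap j.castSucc j.succ) := by
  rw [ofPerm_apply, Equiv.swap_inv]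
  rfl

theorem toPEquiv_mem_of_sgen_mem {M : Submonoid (Rook n)}
    (hs : ∀ i h₁ h₂, sgen n i h₁ h₂ ∈ M) (σ : Equiv.Perm (Fin n)) : σ.toPEquiv ∈ M := by
  suffices ⊤ ≤ M.comap ofPerm from this (Submonoid.mem_top σ⁻¹)
  rcases n with _ | m
  · exact fun τ _ ↦ Subsingleton.elim τ 1 ▸ one_mem _
  rw [← Equiv.Perm.mclosure_swap_castSucc_succ, Submonoid.closure_le]
  rintro _ ⟨j, rfl⟩
  show ofPerm _ ∈ M
  rw [← sgen_eq_ofPerm_swap]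
  exact hs _ _ _

theorem ofSet_mem_of_ofSet_compl_singleton_mem {M : Submonoid (Rook n)}
    (h : ∀ a : Fin n, PEquiv.ofSet ({a}ᶜ : Set (Fin n)) ∈ M) (s : Set (Fin n))
    [DecidablePred (· ∈ s)] : PEquiv.ofSet s ∈ M := by
  suffices ∀ t : Finset (Fin n), PEquiv.ofSet (↑t : Set (Fin n))ᶜ ∈ M by
    convert this sᶜ.toFinset using 2
    simp
  intro t
  induction t using Finset.induction with
  | empty =>
    simp only [Finset.coe_empty, Set.compl_empty, PEquiv.ofSet_univ]
    exact M.one_mem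
  | insert a t _ ih =>
    have := mul_mem (h a) ih
    rw [mul_def, PEquiv.ofSet_trans_ofSet] at this
    convert this using 2
    rw [Finset.coe_insert, Set.insert_eq, Set.compl_union]

theorem ofSet_compl_singleton_mem_of_egen_mem {M : Submonoid (Rook n)}
    (hperm : ∀ σ : Equiv.Perm (Fin n), σ.toPEquiv ∈ M) (he : egen n (n - 1) ∈ M) (a : Fin n) :
    PEquiv.ofSet ({a}ᶜ : Set (Fin n)) ∈ M := by
  let last : Fin n := ⟨n - 1, by have := a.isLt; omega⟩
  have hconj := mul_mem (mul_mem (hperm (Equiv.swap a last)) he)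
    (hperm (Equiv.swap a last).symm)
  rw [egen, mul_def, mul_def, Equiv.toPEquiv_trans_ofSet_trans_symm] at hconj
  convert hconj using 2
  ext x
  rw [Set.mem_compl_singleton_iff, ← (Equiv.swap a last).injective.ne_iff,
    Equiv.swap_apply_left, Fin.ne_iff_vne, Set.mem_preimage, Set.mem_ofPred_eq]
  have hlast : (last : ℕ) = n - 1 := rfl
  have := (Equiv.swap a last x).isLt
  omega

theorem eq_top_of_sgen_mem_of_egen_mem {M : Submonoid (Rook n)}
    (hs : ∀ i h₁ h₂, sgen n i h₁ h₂ ∈ M) (he : egen n (n - 1) ∈ M) : M = ⊤ := by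
  have hperm : ∀ σ : Equiv.Perm (Fin n), σ.toPEquiv ∈ M := toPEquiv_mem_of_sgen_mem hs
  refine top_unique fun f _ ↦ ?_
  obtain ⟨σ, hσ⟩ := f.exists_perm_extend
  rw [f.eq_ofSet_trans_toPEquiv σ hσ]
  have hidem :=
    ofSet_mem_of_ofSet_compl_singleton_mem (ofSet_compl_singleton_mem_of_egen_mem hperm he)
  exact mul_mem (hidem _) (hperm σ)

end Rook

/-- The rook monoid is generated by the adjacent transpositions
`s_1, …, s_{n-1}` together with the single idempotent `e_{n-1}`. -/
theorem rook_generated_by_s_and_e (n : ℕ) :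
    Submonoid.closure
      ({x : Rook n | ∃ (i : ℕ) (h1 : 1 ≤ i) (h2 : i ≤ n - 1), x = sgen n i h1 h2}
        ∪ {egen n (n - 1)}) = ⊤ :=
  Rook.eq_top_of_sgen_mem_of_egen_mem
    (fun i h₁ h₂ ↦ Submonoid.subset_closure (Or.inl ⟨i, h₁, h₂, rfl⟩))
    (Submonoid.subset_closure (Or.inr rfl))
end

section
/- Let (W,S) be a Coxeter system, I,J ⊆ S, and w ∈ W. If ŵ is the minimal-length element of the double coset W_J w W_I, then there exist w_1 ∈ W_I and w_2 ∈ W_J such that w = w_2·ŵ·w_1 and ℓ(w) = ℓ(w_1) + ℓ(ŵ) + ℓ(w_2). -/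
/-!
Tits' argument: letting `s i` act on `W × ZMod 2` by `(t, ε) ↦ (s i t s i, ε + [t = s i])` gives a
representation of `W`, and tracking a word through it shows that the parity of the number of
occurrences of `t` in the left inversion sequence of the word depends only on its product. This
gives the exchange condition for arbitrary words. From it, an element `x` without left descents in
`J` satisfies `ℓ (u x) = ℓ u + ℓ x` for all `u ∈ W_J`, and Deodhar's lemma shows that a double coset
`W_J x W_I` contains only one element without left descents in `J` and right descents in `I`.
Choosing `a ∈ W_J` with `a w` shortest and then `b ∈ W_I` with `a w b` shortest produces such an
element `x = a w b` with `ℓ w = ℓ a⁻¹ + ℓ x + ℓ b⁻¹`, and `x` must be `ŵ`.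
-/

namespace CoxeterSystem

open List

variable {B W : Type*} [Group W] {M : CoxeterMatrix B} (cs : CoxeterSystem M W)

local prefix:100 "s" => cs.simple
local prefix:100 "π" => cs.wordProd
local prefix:100 "ℓ" => cs.length
local prefix:100 "lis" => cs.leftInvSeq

noncomputable section

open scoped Classical

def simpleParityFun (i : B) (p : W × ZMod 2) : W × ZMod 2 :=
  (s i * p.1 * s i, p.2 + if p.1 = s i then 1 else 0)

theorem simple_mul_mul_simple_eq_simple_iff (i : B) (t : W) : s i * t * s i = s i ↔ t = s i := by
  rw [mul_assoc, mul_eq_left, mul_eq_one_iff_eq_inv, inv_simple]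

theorem simpleParityFun_involutive (i : B) : Function.Involutive (cs.simpleParityFun i) := by
  rintro ⟨t, ε⟩
  simp only [simpleParityFun, simple_mul_mul_simple_eq_simple_iff, Prod.mk.injEq]
  refine ⟨by simp only [mul_assoc, simple_mul_simple_cancel_left, simple_mul_simple_self,
    mul_one], ?_⟩
  split_ifs <;> decide +revert

def simpleParityPerm (i : B) : Equiv.Perm (W × ZMod 2) :=
  (cs.simpleParityFun_involutive i).toPerm

theorem prod_map_simpleParityPerm_apply (ω : List B) (t : W) (ε : ZMod 2) :
    (ω.map cs.simpleParityPerm).prod (t, ε) =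
      (π ω * t * (π ω)⁻¹, ε + (lis ω).count (π ω * t * (π ω)⁻¹)) := by
  induction ω with
  | nil => simp
  | cons i ω ih =>
    set t' := π ω * t * (π ω)⁻¹
    have hconj : π (i :: ω) * t * (π (i :: ω))⁻¹ = MulAut.conj (s i) t' := by
      simp only [wordProd_cons, mul_inv_rev, MulAut.conj_apply, t', mul_assoc]
    rw [map_cons, prod_cons, Equiv.Perm.mul_apply, ih, hconj, leftInvSeq, count_cons,
      count_map_of_injective _ _ (MulAut.conj (s i)).injective]
    simp only [simpleParityPerm, Function.Involutive.coe_toPerm, simpleParityFun,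
      MulAut.conj_apply, inv_simple, Prod.mk.injEq, true_and, beq_iff_eq, eq_comm (a := s i),
      simple_mul_mul_simple_eq_simple_iff]
    push_cast
    ring

theorem leftInvSeq_alternatingWord (i i' : B) (p : ℕ) :
    lis (alternatingWord i i' (2 * p)) = (range (2 * p)).map (fun k ↦ s i * (s i' * s i) ^ k) := by
  refine ext_getElem (by simp) fun k hk _ ↦ ?_
  rw [getElem_leftInvSeq_alternatingWord cs i i' p k (by simpa using hk), getElem_map,
    getElem_range, prod_alternatingWord_eq_mul_pow, if_neg (by simp),
    show (2 * k + 1) / 2 = k by omega]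

theorem even_count_leftInvSeq_alternatingWord (i i' : B) (t : W) :
    Even ((lis (alternatingWord i i' (2 * M i i'))).count t) := by
  have hperiodic : (fun k ↦ s i * (s i' * s i) ^ (M i i' + k)) = fun k ↦ s i * (s i' * s i) ^ k := by
    simp only [pow_add, simple_mul_simple_pow', one_mul]
  rw [leftInvSeq_alternatingWord, two_mul, range_add, map_append, map_map, Function.comp_def,
    hperiodic, count_append]
  exact ⟨_, rfl⟩

theorem alternatingWord_two_mul_succ (i i' : B) (m : ℕ) :
    alternatingWord i i' (2 * (m + 1)) = i :: i' :: alternatingWord i i' (2 * m) := by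
  rw [show 2 * (m + 1) = 2 * m + 1 + 1 by ring, alternatingWord_succ', alternatingWord_succ',
    if_neg (by simp), if_pos (by simp)]

theorem isLiftable_simpleParityPerm : M.IsLiftable cs.simpleParityPerm := by
  intro i i'
  have hpow : ∀ m, (cs.simpleParityPerm i * cs.simpleParityPerm i') ^ m =
      ((alternatingWord i i' (2 * m)).map cs.simpleParityPerm).prod := by
    intro m
    induction m with
    | zero => rfl
    | succ m ih => rw [pow_succ', ih, alternatingWord_two_mul_succ]; simp [mul_assoc]
  have hprod : π (alternatingWord i i' (2 * M i i')) = 1 := by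
    rw [prod_alternatingWord_eq_mul_pow, if_pos (by simp), Nat.mul_div_cancel_left _ two_pos,
      simple_mul_simple_pow, one_mul]
  ext ⟨t, ε⟩ <;>
    simp [hpow, prod_map_simpleParityPerm_apply, hprod,
      (ZMod.natCast_eq_zero_iff_even).2 (cs.even_count_leftInvSeq_alternatingWord i i' t)]

def parityRep : W →* Equiv.Perm (W × ZMod 2) :=
  cs.lift ⟨cs.simpleParityPerm, cs.isLiftable_simpleParityPerm⟩

theorem parityRep_wordProd (ω : List B) :
    cs.parityRep (π ω) = (ω.map cs.simpleParityPerm).prod := by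
  rw [wordProd, MonoidHom.map_list_prod, map_map]
  congr 2
  funext i
  exact cs.lift_apply_simple _ i

theorem natCast_count_leftInvSeq_eq {ω ω' : List B} (h : π ω = π ω') (t : W) :
    ((lis ω).count t : ZMod 2) = (lis ω').count t := by
  have := congrArg (fun g ↦ (cs.parityRep g ((π ω)⁻¹ * t * π ω, 0)).2) h
  simp only [parityRep_wordProd, prod_map_simpleParityPerm_apply] at this
  rw [← h] at this
  simpa [mul_assoc] using this

theorem exists_simple_mul_eq_eraseIdx {ω : List B} {i : B}
    (hi : cs.IsLeftDescent (π ω) i) : ∃ j < ω.length, s i * π ω = π (ω.eraseIdx j) := by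
  obtain ⟨ω', hω', h'⟩ := cs.exists_isReduced (s i * π ω)
  have hprod : π (i :: ω') = π ω := by rw [wordProd_cons, ← h', simple_mul_simple_cancel_left]
  have hred : cs.IsReduced (i :: ω') := by
    rw [IsReduced, hprod, length_cons, ← hω'.eq, ← h', (cs.isLeftDescent_iff).1 hi]
  have hcount : (lis (i :: ω')).count (s i) = 1 :=
    count_eq_one_of_mem hred.nodup_leftInvSeq (by simp [leftInvSeq])
  have hmem : s i ∈ lis ω := by
    have := cs.natCast_count_leftInvSeq_eq hprod (s i)
    rw [hcount, Nat.cast_one, eq_comm, ZMod.natCast_eq_one_iff_odd] at this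
    exact count_pos_iff.1 this.pos
  obtain ⟨j, hj, hget⟩ := mem_iff_getElem.1 hmem
  refine ⟨j, by simpa using hj, ?_⟩
  rw [← getD_leftInvSeq_mul_wordProd, getD_eq_getElem _ _ hj, hget]

end

theorem length_wordProd_eraseIdx_lt {ω : List B} {j : ℕ} (hj : j < ω.length) :
    ℓ (π (ω.eraseIdx j)) < ω.length :=
  (cs.length_wordProd_le _).trans_lt (by rw [← length_eraseIdx_add_one hj]; omega)

abbrev parabolic (J : Set B) : Subgroup W := Subgroup.closure (cs.simple '' J)

variable {cs} {I J : Set B}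

theorem simple_mem_parabolic {j : B} (hj : j ∈ J) : s j ∈ cs.parabolic J :=
  Subgroup.subset_closure ⟨j, hj, rfl⟩

@[elab_as_elim]
theorem parabolic_induction_left {p : W → Prop} (one : p 1)
    (mul_left : ∀ j ∈ J, ∀ w, p w → p (s j * w)) {w : W} (hw : w ∈ cs.parabolic J) : p w := by
  induction hw using Subgroup.closure_induction_left with
  | one => exact one
  | mul_left _ hx _ _ ih => obtain ⟨j, hj, rfl⟩ := hx; exact mul_left j hj _ ih
  | inv_mul_cancel _ hx _ _ ih =>
    obtain ⟨j, hj, rfl⟩ := hx; rw [inv_simple]; exact mul_left j hj _ ih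

@[elab_as_elim]
theorem parabolic_induction_right {p : W → Prop} (one : p 1)
    (mul_right : ∀ w, ∀ i ∈ I, p w → p (w * s i)) {w : W} (hw : w ∈ cs.parabolic I) : p w := by
  induction hw using Subgroup.closure_induction_right with
  | one => exact one
  | mul_right _ _ _ hx ih => obtain ⟨i, hi, rfl⟩ := hx; exact mul_right _ i hi ih
  | mul_inv_cancel _ _ _ hx ih =>
    obtain ⟨i, hi, rfl⟩ := hx; rw [inv_simple]; exact mul_right _ i hi ih

theorem exists_reduced_word_of_mem_parabolic {u : W} (hu : u ∈ cs.parabolic J) :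
    ∃ ω : List B, cs.IsReduced ω ∧ (∀ b ∈ ω, b ∈ J) ∧ u = π ω := by
  refine parabolic_induction_left ⟨[], by simp [IsReduced], by simp, by simp⟩
    (fun j hj _ ⟨ω, hω, hωJ, hu⟩ ↦ ?_) hu
  subst hu
  by_cases hdesc : cs.IsLeftDescent (π ω) j
  · obtain ⟨k, hk, heq⟩ := cs.exists_simple_mul_eq_eraseIdx hdesc
    refine ⟨ω.eraseIdx k, ?_, fun b hb ↦ hωJ b (eraseIdx_subset hb), heq⟩
    rw [IsReduced, ← heq, ← Nat.add_right_cancel_iff (n := 1), (cs.isLeftDescent_iff).1 hdesc,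
      length_eraseIdx_add_one hk, hω.eq]
  · refine ⟨j :: ω, ?_, by simpa using ⟨hj, hωJ⟩, (cs.wordProd_cons j ω).symm⟩
    rw [IsReduced, wordProd_cons, (cs.not_isLeftDescent_iff).1 hdesc, hω.eq, length_cons]

theorem exists_isLeftDescent_of_mem_parabolic {u : W} (hu : u ∈ cs.parabolic J) (hu1 : u ≠ 1) :
    ∃ j ∈ J, cs.IsLeftDescent u j := by
  obtain ⟨ω, hω, hωJ, rfl⟩ := exists_reduced_word_of_mem_parabolic hu
  obtain _ | ⟨j, ω'⟩ := ω
  · exact absurd cs.wordProd_nil hu1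
  · refine ⟨j, hωJ j mem_cons_self, ?_⟩
    rw [IsLeftDescent, hω.eq, wordProd_cons, simple_mul_simple_cancel_left, length_cons]
    exact (cs.length_wordProd_le ω').trans_lt (Nat.lt_succ_self _)

theorem exists_simple_mul_eq_eraseIdx_of_append {ω ω' : List B} {j : B}
    (hj : cs.IsLeftDescent (π ω * π ω') j) :
    (∃ k < ω.length, s j * π ω = π (ω.eraseIdx k)) ∨
      ∃ k < ω'.length, s j * (π ω * π ω') = π ω * π (ω'.eraseIdx k) := by
  rw [← wordProd_append] at hj
  obtain ⟨k, hk, heq⟩ := cs.exists_simple_mul_eq_eraseIdx hj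
  rw [length_append] at hk
  rcases lt_or_ge k ω.length with hk' | hk'
  · rw [eraseIdx_append_of_lt_length hk', wordProd_append, wordProd_append, ← mul_assoc,
      mul_left_inj] at heq
    exact .inl ⟨k, hk', heq⟩
  · rw [eraseIdx_append_of_length_le hk', wordProd_append, wordProd_append] at heq
    exact .inr ⟨k - ω.length, by omega, heq⟩

theorem length_mul_eq_add_of_forall_length_le {x : W}
    (hmin : ∀ b ∈ cs.parabolic J, ℓ x ≤ ℓ (b * x)) {u : W} (hu : u ∈ cs.parabolic J) :
    ℓ (u * x) = ℓ u + ℓ x := by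
  induction hn : ℓ u using Nat.strong_induction_on generalizing u with
  | _ n ih =>
  subst hn
  by_cases hu1 : u = 1
  · simp [hu1]
  obtain ⟨j, hj, hdesc⟩ := exists_isLeftDescent_of_mem_parabolic hu hu1
  have hu' : s j * u ∈ cs.parabolic J := mul_mem (simple_mem_parabolic hj) hu
  obtain ⟨ω, hω, hωu⟩ := cs.exists_isReduced (s j * u)
  obtain ⟨ωx, hωx, rfl⟩ := cs.exists_isReduced x
  have hlen : ω.length + 1 = ℓ u := by rw [← hω.eq, ← hωu, (cs.isLeftDescent_iff).1 hdesc]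
  have hu_eq : u = s j * π ω := by rw [← hωu, simple_mul_simple_cancel_left]
  have ih' : ℓ (π ω * π ωx) = ω.length + ℓ (π ωx) := by
    rw [← hωu, ih _ (by rw [hωu, hω.eq]; omega) hu' rfl, hωu, hω.eq]
  suffices ¬ cs.IsLeftDescent (π ω * π ωx) j by
    rw [← hlen, hu_eq, mul_assoc, (cs.not_isLeftDescent_iff).1 this, ih']
    omega
  intro hdesc'
  -- Exchange deletes a letter either of the word for `s j * u`, making `u` too short, or of the
  -- word for `x`, contradicting the minimality of `x` in its coset.
  rcases cs.exists_simple_mul_eq_eraseIdx_of_append hdesc' with ⟨k, hk, heq⟩ | ⟨k, hk, heq⟩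
  · have := cs.length_wordProd_eraseIdx_lt hk
    rw [← heq, ← hu_eq] at this
    omega
  · have hconj : (π ω)⁻¹ * s j * π ω * π ωx = π (ωx.eraseIdx k) := by
      simp only [mul_assoc] at heq ⊢
      rw [heq, inv_mul_cancel_left]
    rw [hωu] at hu'
    have hle := hmin _ (mul_mem (mul_mem (inv_mem hu') (simple_mem_parabolic hj)) hu')
    rw [hconj] at hle
    have := cs.length_wordProd_eraseIdx_lt hk
    have := hωx.eq
    omega

theorem exists_mem_forall_length_mul_le_left (H : Subgroup W) (w : W) :
    ∃ a ∈ H, ∀ b ∈ H, ℓ (a * w) ≤ ℓ (b * w) :=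
  ⟨_, Function.argminOn_mem (fun a ↦ ℓ (a * w)) (H : Set W) ⟨1, H.one_mem⟩,
    fun _ hb ↦ Function.argminOn_le (fun a ↦ ℓ (a * w)) (H : Set W) hb⟩

theorem exists_mem_forall_length_mul_le_right (H : Subgroup W) (w : W) :
    ∃ a ∈ H, ∀ b ∈ H, ℓ (w * a) ≤ ℓ (w * b) :=
  ⟨_, Function.argminOn_mem (fun a ↦ ℓ (w * a)) (H : Set W) ⟨1, H.one_mem⟩,
    fun _ hb ↦ Function.argminOn_le (fun a ↦ ℓ (w * a)) (H : Set W) hb⟩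

theorem length_mul_eq_add_of_forall_not_isLeftDescent {x : W}
    (hx : ∀ j ∈ J, ¬ cs.IsLeftDescent x j) {u : W} (hu : u ∈ cs.parabolic J) :
    ℓ (u * x) = ℓ u + ℓ x := by
  obtain ⟨a, ha, hmin⟩ := cs.exists_mem_forall_length_mul_le_left (cs.parabolic J) x
  have hmin' : ∀ b ∈ cs.parabolic J, ℓ (a * x) ≤ ℓ (b * (a * x)) := fun b hb ↦ by
    simpa only [mul_assoc] using hmin (b * a) (mul_mem hb ha)
  suffices a = 1 by simpa [this] using length_mul_eq_add_of_forall_length_le hmin' hu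
  by_contra ha1
  obtain ⟨j, hj, hdesc⟩ :=
    exists_isLeftDescent_of_mem_parabolic (inv_mem ha) (inv_ne_one.2 ha1)
  have h1 := length_mul_eq_add_of_forall_length_le hmin' (inv_mem ha)
  have h2 := length_mul_eq_add_of_forall_length_le hmin'
    (mul_mem (simple_mem_parabolic hj) (inv_mem ha))
  simp only [inv_mul_cancel_left, mul_assoc] at h1 h2
  have := hx j hj
  rw [IsLeftDescent, h1, h2] at this
  rw [isLeftDescent_iff] at hdesc
  omega

theorem length_mul_eq_add_of_forall_not_isRightDescent {x : W}
    (hx : ∀ i ∈ I, ¬ cs.IsRightDescent x i) {v : W} (hv : v ∈ cs.parabolic I) :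
    ℓ (x * v) = ℓ x + ℓ v := by
  have := length_mul_eq_add_of_forall_not_isLeftDescent
    (fun i hi ↦ cs.isLeftDescent_inv_iff.not.2 (hx i hi)) (inv_mem hv)
  rw [← mul_inv_rev, length_inv, length_inv, length_inv] at this
  omega

theorem eq_of_eq_mul_of_forall_not_isLeftDescent {x y u : W}
    (hx : ∀ j ∈ J, ¬ cs.IsLeftDescent x j) (hy : ∀ j ∈ J, ¬ cs.IsLeftDescent y j)
    (hu : u ∈ cs.parabolic J) (h : y = u * x) : y = x := by
  subst h
  have h1 := length_mul_eq_add_of_forall_not_isLeftDescent hx hu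
  have h2 := length_mul_eq_add_of_forall_not_isLeftDescent hy (inv_mem hu)
  rw [inv_mul_cancel_left, length_inv] at h2
  rw [(cs.length_eq_zero_iff (w := u)).1 (by omega), one_mul]

theorem eq_of_eq_mul_of_forall_not_isRightDescent {x y v : W}
    (hx : ∀ i ∈ I, ¬ cs.IsRightDescent x i) (hy : ∀ i ∈ I, ¬ cs.IsRightDescent y i)
    (hv : v ∈ cs.parabolic I) (h : y = x * v) : y = x := by
  subst h
  have h1 := length_mul_eq_add_of_forall_not_isRightDescent hx hv
  have h2 := length_mul_eq_add_of_forall_not_isRightDescent hy (inv_mem hv)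
  rw [mul_inv_cancel_right, length_inv] at h2
  rw [(cs.length_eq_zero_iff (w := v)).1 (by omega), mul_one]

-- Deodhar's lemma
theorem forall_not_isLeftDescent_mul_simple_or {x : W}
    (hx : ∀ j ∈ J, ¬ cs.IsLeftDescent x j) (i : B) :
    (∀ j ∈ J, ¬ cs.IsLeftDescent (x * s i) j) ∨ ∃ j ∈ J, x * s i = s j * x := by
  by_contra! h
  obtain ⟨⟨j, hj, hdesc⟩, hne⟩ := h
  obtain ⟨ω, hω, rfl⟩ := cs.exists_isReduced x
  rw [← wordProd_singleton cs i] at hdesc hne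
  rcases cs.exists_simple_mul_eq_eraseIdx_of_append hdesc with ⟨k, hk, heq⟩ | ⟨k, hk, heq⟩
  · refine hx j hj ?_
    rw [IsLeftDescent, heq, hω.eq]
    exact cs.length_wordProd_eraseIdx_lt hk
  · obtain rfl : k = 0 := by simpa using hk
    refine hne j hj ?_
    rw [eraseIdx_cons_zero, wordProd_nil, mul_one] at heq
    nth_rw 2 [← heq]
    rw [simple_mul_simple_cancel_left]

theorem exists_mul_eq_mul_mul_of_forall_not_isLeftDescent {x b : W}
    (hx : ∀ j ∈ J, ¬ cs.IsLeftDescent x j) (hb : b ∈ cs.parabolic I) :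
    ∃ u ∈ cs.parabolic J, ∃ v ∈ cs.parabolic I,
      x * b = u * (x * v) ∧ ∀ j ∈ J, ¬ cs.IsLeftDescent (x * v) j := by
  refine parabolic_induction_right ⟨1, one_mem _, 1, one_mem _, by simp, by simpa using hx⟩
    (fun b i hi ⟨u, hu, v, hv, heq, hxv⟩ ↦ ?_) hb
  rcases forall_not_isLeftDescent_mul_simple_or hxv i with h | ⟨j, hj, h⟩
  · refine ⟨u, hu, v * s i, mul_mem hv (simple_mem_parabolic hi), ?_, ?_⟩
    · rw [← mul_assoc, heq]; simp only [mul_assoc]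
    · simpa only [mul_assoc] using h
  · refine ⟨u * s j, mul_mem hu (simple_mem_parabolic hj), v, hv, ?_, hxv⟩
    rw [← mul_assoc, heq, mul_assoc, h]; simp only [mul_assoc]

theorem eq_of_eq_mul_mul_of_forall_not_isDescent {x y a b : W}
    (hxJ : ∀ j ∈ J, ¬ cs.IsLeftDescent x j) (hxI : ∀ i ∈ I, ¬ cs.IsRightDescent x i)
    (hyJ : ∀ j ∈ J, ¬ cs.IsLeftDescent y j) (hyI : ∀ i ∈ I, ¬ cs.IsRightDescent y i)
    (ha : a ∈ cs.parabolic J) (hb : b ∈ cs.parabolic I) (h : y = a * x * b) : y = x := by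
  obtain ⟨u, hu, v, hv, hxb, hxvJ⟩ := exists_mul_eq_mul_mul_of_forall_not_isLeftDescent hxJ hb
  have hy : y = x * v := eq_of_eq_mul_of_forall_not_isLeftDescent hxvJ hyJ (mul_mem ha hu)
    (by rw [h, mul_assoc, hxb, mul_assoc])
  exact eq_of_eq_mul_of_forall_not_isRightDescent hxI hyI hv hy

theorem exists_eq_mul_mul_of_forall_not_isDescent (I J : Set B) (w : W) :
    ∃ a ∈ cs.parabolic J, ∃ x, ∃ b ∈ cs.parabolic I, w = a * x * b ∧
      ℓ w = ℓ b + ℓ x + ℓ a ∧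
      (∀ j ∈ J, ¬ cs.IsLeftDescent x j) ∧ ∀ i ∈ I, ¬ cs.IsRightDescent x i := by
  obtain ⟨u, hu, humin⟩ := cs.exists_mem_forall_length_mul_le_left (cs.parabolic J) w
  obtain ⟨v, hv, hvmin⟩ := cs.exists_mem_forall_length_mul_le_right (cs.parabolic I) (u * w)
  have huwJ : ∀ j ∈ J, ¬ cs.IsLeftDescent (u * w) j := fun j hj ↦ by
    simpa only [IsLeftDescent, not_lt, mul_assoc] using
      humin _ (mul_mem (simple_mem_parabolic hj) hu)
  have hxI : ∀ i ∈ I, ¬ cs.IsRightDescent (u * w * v) i := fun i hi ↦ by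
    simpa only [IsRightDescent, not_lt, mul_assoc] using
      hvmin _ (mul_mem hv (simple_mem_parabolic hi))
  have huw : ℓ (u * w) = ℓ (u * w * v) + ℓ v⁻¹ := by
    rw [← length_mul_eq_add_of_forall_not_isRightDescent hxI (inv_mem hv), mul_inv_cancel_right]
  have hxJ : ∀ j ∈ J, ¬ cs.IsLeftDescent (u * w * v) j := by
    intro j hj hdesc
    have := cs.length_mul_le (s j * (u * w * v)) v⁻¹
    rw [mul_assoc (s j), mul_inv_cancel_right] at this
    exact huwJ j hj (by rw [IsLeftDescent] at hdesc ⊢; omega)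
  have hw : ℓ w = ℓ u⁻¹ + ℓ (u * w) := by
    rw [← length_mul_eq_add_of_forall_not_isLeftDescent huwJ (inv_mem hu), inv_mul_cancel_left]
  refine ⟨u⁻¹, inv_mem hu, u * w * v, v⁻¹, inv_mem hv, by group, by omega, hxJ, hxI⟩

end CoxeterSystem

/-- In a Coxeter system `(W, S)`, if `wh` is the minimal-length element of the
double coset `W_J · w · W_I`, then `w = w₂ · wh · w₁` for some `w₁ ∈ W_I`,
`w₂ ∈ W_J` with `ℓ(w) = ℓ(w₁) + ℓ(wh) + ℓ(w₂)`. -/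
theorem coxeter_double_coset_length_decomposition {B W : Type*} [Group W]
    {M : CoxeterMatrix B} (cs : CoxeterSystem M W) (I J : Set B) (w wh : W)
    (hmem : ∃ u ∈ Subgroup.closure (cs.simple '' J),
      ∃ v ∈ Subgroup.closure (cs.simple '' I), wh = u * w * v)
    (hmin : ∀ x : W,
      (∃ u ∈ Subgroup.closure (cs.simple '' J),
        ∃ v ∈ Subgroup.closure (cs.simple '' I), x = u * w * v) →
      cs.length wh ≤ cs.length x) :
    ∃ w₁ ∈ Subgroup.closure (cs.simple '' I),
      ∃ w₂ ∈ Subgroup.closure (cs.simple '' J),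
        w = w₂ * wh * w₁ ∧
        cs.length w = cs.length w₁ + cs.length wh + cs.length w₂ := by
  obtain ⟨u, hu, v, hv, hwh⟩ := hmem
  have hJ : ∀ j ∈ J, ¬ cs.IsLeftDescent wh j := fun j hj ↦ not_lt.2 <| hmin _
    ⟨cs.simple j * u, mul_mem (CoxeterSystem.simple_mem_parabolic hj) hu, v, hv,
      by rw [hwh]; simp only [mul_assoc]⟩
  have hI : ∀ i ∈ I, ¬ cs.IsRightDescent wh i := fun i hi ↦ not_lt.2 <| hmin _
    ⟨u, hu, v * cs.simple i, mul_mem hv (CoxeterSystem.simple_mem_parabolic hi),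
      by rw [hwh]; simp only [mul_assoc]⟩
  obtain ⟨a, ha, x, b, hb, hw, hlen, hxJ, hxI⟩ :=
    cs.exists_eq_mul_mul_of_forall_not_isDescent I J w
  have hx : wh = x := CoxeterSystem.eq_of_eq_mul_mul_of_forall_not_isDescent hxJ hxI hJ hI
    (mul_mem hu ha) (mul_mem hb hv) (by rw [hwh, hw]; simp only [mul_assoc])
  exact ⟨b, hb, a, ha, hx ▸ hw, hx ▸ hlen⟩
end

section
/- Define a length function ℓ on the rook monoid R_n by: ℓ(w) is the minimal total number of transposition letters among all expressions of w as a word in the generators s_1,…,s_{n−1}, e_0,…,e_{n−1} (where each s_i counts 1 and each e_j counts 0). Then ℓ restricted to the unit group S_n of R_n coincides with the Coxeter length on S_n. -/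
/-!
Both sides are compared with the inversion number. Counted for a partial injection `f` as the
pairs `a < b` in its domain with `f b < f a`, it is subadditive on the rook monoid, vanishes on
every `e_j` and is at most `1` on every `s_i`; so every word for a permutation has at least as
many `s`-letters as the permutation has inversions. Conversely, multiplying a permutation on the
right by the adjacent transposition at a descent removes an inversion, so descending to the
identity spells the permutation with at most that many `s`-letters.
-/

open scoped Classical

def IsSGen (n : ℕ) (x : Rook n) : Prop :=
  ∃ (i : ℕ) (h1 : 1 ≤ i) (h2 : i ≤ n - 1), x = sgen n i h1 h2

def IsEGen (n : ℕ) (x : Rook n) : Prop := ∃ j ≤ n - 1, x = egen n j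

noncomputable def wt (n : ℕ) (x : Rook n) : ℕ := if IsSGen n x then 1 else 0

noncomputable def rookLength (n : ℕ) (w : Rook n) : ℕ :=
  sInf {k | ∃ l : List (Rook n), (∀ x ∈ l, IsSGen n x ∨ IsEGen n x) ∧
    l.prod = w ∧ k = (l.map (wt n)).sum}

noncomputable def coxLength (n : ℕ) (p : Equiv.Perm (Fin n)) : ℕ :=
  (Finset.univ.filter (fun q : Fin n × Fin n => q.1 < q.2 ∧ p q.2 < p q.1)).card

open Equiv Finset

section Perm

variable {n : ℕ}

lemma swap_apply_lt_swap_apply_iff {u v x y : Fin n} (huv : (u : ℕ) + 1 = v) (hxy : x < y) :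
    swap u v y < swap u v x ↔ x = u ∧ y = v := by
  rw [swap_apply_def, swap_apply_def]
  rw [Fin.lt_def] at hxy ⊢
  split_ifs <;> simp only [Fin.ext_iff] at * <;> omega

lemma coxLength_swap_le_one {u v : Fin n} (huv : (u : ℕ) + 1 = v) :
    coxLength n (swap u v) ≤ 1 := by
  have hinv : ∀ q ∈ univ.filter (fun q : Fin n × Fin n => q.1 < q.2 ∧ swap u v q.2 < swap u v q.1),
      q = (u, v) := by
    rintro ⟨x, y⟩ hq
    obtain ⟨hxy, hswap⟩ := (mem_filter.1 hq).2
    obtain ⟨rfl, rfl⟩ := (swap_apply_lt_swap_apply_iff huv hxy).1 hswap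
    rfl
  exact card_le_one.2 fun a ha b hb => (hinv a ha).trans (hinv b hb).symm

lemma coxLength_mul_swap_lt {u v : Fin n} (huv : (u : ℕ) + 1 = v) {p : Perm (Fin n)}
    (hdesc : p v < p u) : coxLength n (p * swap u v) < coxLength n p := by
  have huv' : u < v := Fin.lt_def.2 (by omega)
  have hmem : (u, v) ∈ univ.filter (fun q : Fin n × Fin n => q.1 < q.2 ∧ p q.2 < p q.1) := by
    simp [huv', hdesc]
  refine lt_of_le_of_lt ?_ (card_erase_lt_of_mem hmem)
  refine card_le_card_of_injOn ((swap u v).prodCongr (swap u v)) ?_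
    ((swap u v).prodCongr (swap u v)).injective.injOn
  intro q hq
  rw [mem_coe, mem_filter] at hq
  obtain ⟨a, b⟩ := q
  obtain ⟨-, hab, hpab : p (swap u v b) < p (swap u v a)⟩ := hq
  have hlt : swap u v a < swap u v b := by
    refine lt_of_le_of_ne (not_lt.1 fun hba => ?_) ((swap u v).injective.ne hab.ne)
    obtain ⟨rfl, rfl⟩ := (swap_apply_lt_swap_apply_iff huv hab).1 hba
    simp only [swap_apply_left, swap_apply_right] at hpab
    exact hpab.asymm hdesc
  rw [mem_coe, mem_erase, mem_filter, prodCongr_apply, Prod.map_apply]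
  refine ⟨fun h => ?_, mem_univ _, hlt, hpab⟩
  obtain ⟨rfl, rfl⟩ : a = v ∧ b = u := by
    simpa only [Prod.mk.injEq, swap_apply_eq_iff, swap_apply_left, swap_apply_right] using h
  exact hab.asymm huv'

lemma exists_adjacent_descent {p : Perm (Fin n)} (hp : p ≠ 1) :
    ∃ u v : Fin n, (u : ℕ) + 1 = v ∧ p v < p u := by
  by_contra! h
  cases n with
  | zero => exact hp (Subsingleton.elim _ _)
  | succ m =>
    have hmono : StrictMono p := Fin.strictMono_iff_lt_succ.2 fun i =>
      (h i.castSucc i.succ (by simp)).lt_of_ne (p.injective.ne Fin.castSucc_lt_succ.ne)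
    exact hp (Equiv.ext fun _ => hmono.apply_eq)

end Perm

namespace Rook

variable {n : ℕ}

lemma toPEquiv_mul (p q : Perm (Fin n)) :
    ((p * q).toPEquiv : Rook n) = q.toPEquiv * p.toPEquiv :=
  Equiv.toPEquiv_trans q p

def inversions (f : Rook n) : Finset (Fin n × Fin n) :=
  univ.filter fun q => q.1 < q.2 ∧ ∃ x ∈ f q.1, ∃ y ∈ f q.2, y < x

lemma card_inversions_toPEquiv (p : Perm (Fin n)) :
    #(inversions p.toPEquiv) = coxLength n p := by
  simp [inversions, coxLength]

lemma inversions_one : inversions (1 : Rook n) = ∅ :=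
  filter_eq_empty_iff.2 fun _ _ ⟨hab, _, rfl, _, rfl, hba⟩ => hab.asymm hba

lemma inversions_egen (j : ℕ) : inversions (egen n j) = ∅ := by
  refine filter_eq_empty_iff.2 fun ⟨a, b⟩ _ => ?_
  simp only [egen, PEquiv.mem_ofSet_iff]
  rintro ⟨hab, _, ⟨rfl, -⟩, _, ⟨rfl, -⟩, hba⟩
  exact hab.asymm hba

lemma card_inversions_sgen_le (i : ℕ) (h1 : 1 ≤ i) (h2 : i ≤ n - 1) :
    #(inversions (sgen n i h1 h2)) ≤ 1 := by
  rw [sgen, card_inversions_toPEquiv]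
  exact coxLength_swap_le_one (Nat.sub_add_cancel h1)

lemma card_inversions_le_wt {x : Rook n} (hx : IsSGen n x ∨ IsEGen n x) :
    #(inversions x) ≤ wt n x := by
  rcases hx with ⟨i, h1, h2, rfl⟩ | ⟨j, -, rfl⟩
  · rw [wt, if_pos ⟨i, h1, h2, rfl⟩]
    exact card_inversions_sgen_le i h1 h2
  · simp [inversions_egen]

lemma card_inversions_mul_le (f g : Rook n) :
    #(inversions (f * g)) ≤ #(inversions f) + #(inversions g) := by
  rw [← card_filter_add_card_filter_not (s := inversions (f * g)) (fun q => q ∈ inversions f)]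
  refine add_le_add (card_le_card fun q hq => (mem_filter.1 hq).2) ?_
  -- a pair not inverted by `f` is carried by `f` to a pair inverted by `g`
  let back : Fin n × Fin n → Fin n × Fin n :=
    fun q => ((f.symm q.1).getD q.1, (f.symm q.2).getD q.2)
  refine (card_le_card fun q hq => ?_).trans (card_image_le (s := inversions g) (f := back))
  obtain ⟨a, b⟩ := q
  simp only [inversions, mem_filter, mem_univ, true_and, not_and] at hq
  obtain ⟨⟨hab, x, hx, y, hy, hyx⟩, hf⟩ := hq
  obtain ⟨a', ha', hx⟩ := (PEquiv.mem_trans f g a x).1 hx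
  obtain ⟨b', hb', hy⟩ := (PEquiv.mem_trans f g b y).1 hy
  have hne : a' ≠ b' := by rintro rfl; exact hyx.ne (Option.mem_unique hy hx)
  have hlt : a' < b' := hne.lt_of_le (not_lt.1 fun h => hf hab ⟨a', ha', b', hb', h⟩)
  refine mem_image.2 ⟨(a', b'), mem_filter.2 ⟨mem_univ _, hlt, x, hx, y, hy, hyx⟩, ?_⟩
  simp [back, f.eq_some_iff.2 ha', f.eq_some_iff.2 hb']

lemma card_inversions_prod_le (l : List (Rook n)) :
    #(inversions l.prod) ≤ (l.map fun f => #(inversions f)).sum := by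
  induction l with
  | nil => simp [inversions_one]
  | cons f l ih =>
    rw [List.prod_cons, List.map_cons, List.sum_cons]
    exact (card_inversions_mul_le f l.prod).trans (by gcongr)

lemma isSGen_toPEquiv_swap {u v : Fin n} (huv : (u : ℕ) + 1 = v) :
    IsSGen n (swap u v).toPEquiv := by
  refine ⟨v, by omega, by omega, ?_⟩
  rw [sgen]
  congr
  exact Fin.ext (Nat.sub_eq_of_eq_add huv.symm).symm

lemma exists_sgen_word (p : Perm (Fin n)) :
    ∃ l : List (Rook n), (∀ x ∈ l, IsSGen n x) ∧ l.prod = p.toPEquiv ∧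
      (l.map (wt n)).sum ≤ coxLength n p := by
  by_cases hp : p = 1
  · subst hp
    exact ⟨[], by simp, Equiv.toPEquiv_refl.symm, by simp⟩
  obtain ⟨u, v, huv, hdesc⟩ := exists_adjacent_descent hp
  obtain ⟨l, hl, hprod, hwt⟩ := exists_sgen_word (p * swap u v)
  refine ⟨(swap u v).toPEquiv :: l, ?_, ?_, ?_⟩
  · exact List.forall_mem_cons.2 ⟨isSGen_toPEquiv_swap huv, hl⟩
  · rw [List.prod_cons, hprod, ← toPEquiv_mul, mul_swap_mul_self]
  · rw [List.map_cons, List.sum_cons, wt, if_pos (isSGen_toPEquiv_swap huv)]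
    have hdrop := coxLength_mul_swap_lt huv hdesc
    omega
termination_by coxLength n p
decreasing_by exact coxLength_mul_swap_lt huv hdesc

end Rook

/-- The length function on the rook monoid (minimal number of `s`-letters over
all word representatives in the generators `s_i`, `e_j`) restricts to the
Coxeter length (number of inversions) on the unit group `S_n`. -/
theorem rookLength_restricts_to_coxeter_length (n : ℕ) (p : Equiv.Perm (Fin n)) :
    rookLength n p.toPEquiv = coxLength n p := by
  obtain ⟨w, hw, hwprod, hwwt⟩ := Rook.exists_sgen_word p
  have hgen : ∀ x ∈ w, IsSGen n x ∨ IsEGen n x := fun x hx => Or.inl (hw x hx)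
  apply le_antisymm
  · exact le_trans (Nat.sInf_le ⟨w, hgen, hwprod, rfl⟩) hwwt
  · refine le_csInf ⟨_, w, hgen, hwprod, rfl⟩ ?_
    rintro _ ⟨l, hl, hprod, rfl⟩
    calc coxLength n p = #(Rook.inversions l.prod) := by rw [hprod, Rook.card_inversions_toPEquiv]
      _ ≤ (l.map fun f => #(Rook.inversions f)).sum := Rook.card_inversions_prod_le l
      _ ≤ (l.map (wt n)).sum := List.sum_le_sum fun x hx => Rook.card_inversions_le_wt (hl x hx)
end
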